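/- arXiv:1010.0774 — 7 statements merged into one kernel-verified Lean document; each statement's English description precedes it below -/
import Mathlib

section
/- If f : ℝ → ℝ is a twice differentiable positive function with f(0) = a > 0, f'(0) = 0, satisfying f·(4+f²)·f'' = 4·(1+f'²), then for all t, (f(t)²+4)·(1+f'(t)²)/f(t)² = (a²+4)/a². -/
/-! `(f² + 4)(1 + f'²) / f²` is a first integral: its derivative is `2 f' / f³` times the
defect `f (4 + f²) f'' - 4 (1 + f'²)` of the ODE, so it is constant along solutions. -/

noncomputable def catenoidFirstIntegral (f : ℝ → ℝ) (t : ℝ) : ℝ :=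
  (f t ^ 2 + 4) * (1 + deriv f t ^ 2) / f t ^ 2

theorem hasDerivAt_catenoidFirstIntegral {f : ℝ → ℝ} {t : ℝ} (hf : DifferentiableAt ℝ f t)
    (hf' : DifferentiableAt ℝ (deriv f) t) (hft : f t ≠ 0) :
    HasDerivAt (catenoidFirstIntegral f)
      (2 * deriv f t * (f t * (4 + f t ^ 2) * deriv (deriv f) t - 4 * (1 + deriv f t ^ 2))
        / f t ^ 3) t := by
  have hnum :=
    ((hf.hasDerivAt.fun_pow 2).add_const 4).fun_mul ((hf'.hasDerivAt.fun_pow 2).const_add 1)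
  have hquot := hnum.fun_div (hf.hasDerivAt.fun_pow 2) (pow_ne_zero 2 hft)
  refine hquot.congr_deriv ?_
  field_simp
  ring

theorem stmt_1_general (a : ℝ) (f : ℝ → ℝ)
    (hpos : ∀ t, 0 < f t) (hf : Differentiable ℝ f) (hf' : Differentiable ℝ (deriv f))
    (h0 : f 0 = a) (h0' : deriv f 0 = 0)
    (hode : ∀ t, f t * (4 + f t ^ 2) * deriv (deriv f) t = 4 * (1 + (deriv f t) ^ 2)) :
    ∀ t : ℝ, (f t ^ 2 + 4) * (1 + (deriv f t) ^ 2) / f t ^ 2 = (a ^ 2 + 4) / a ^ 2 := by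
  have hderiv_zero : ∀ t, HasDerivAt (catenoidFirstIntegral f) 0 t := fun t => by
    simpa [hode t] using hasDerivAt_catenoidFirstIntegral (hf t) (hf' t) (hpos t).ne'
  intro t
  have h := is_const_of_deriv_eq_zero (fun s => (hderiv_zero s).differentiableAt)
    (fun s => (hderiv_zero s).deriv) t 0
  simpa [catenoidFirstIntegral, h0, h0'] using h

theorem stmt_1 (a : ℝ) (ha : 0 < a) (f : ℝ → ℝ)
    (hpos : ∀ t, 0 < f t) (hf : Differentiable ℝ f) (hf' : Differentiable ℝ (deriv f))
    (h0 : f 0 = a) (h0' : deriv f 0 = 0)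
    (hode : ∀ t, f t * (4 + f t ^ 2) * deriv (deriv f) t = 4 * (1 + (deriv f t) ^ 2)) :
    ∀ t : ℝ, (f t ^ 2 + 4) * (1 + (deriv f t) ^ 2) / f t ^ 2 = (a ^ 2 + 4) / a ^ 2 :=
  stmt_1_general a f hpos hf hf' h0 h0' hode
end

section
/- For a > 0, the function φ_a(a,τ) := ∫_1^{τ/a} (a²v²+2)/√((a²v²+4)(v²−1)) dv − (τ/2)·√((τ²+4)/(τ²−a²)) is positive for all sufficiently large τ. -/
/-!
Since `(a²v² + 2)² - a²(a²v² + 4)(v² - 1) = a⁴v² + 4a² + 4 > 0`, the integrand is at least `a`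
on `(1, τ/a]`, so the integral is at least `a (τ/a - 1) = τ - a`. The subtracted term is
`(τ/2) (1 + o(1))`, hence at most `3τ/4` for large `τ`, and `τ - a - 3τ/4 > 0` once `τ > 4a`.
The integrand has an integrable singularity `≍ (v - 1)^(-1/2)` at `v = 1`.
-/

open Real Filter intervalIntegral Set

noncomputable def phiDerivIntegrand (a v : ℝ) : ℝ :=
  (a ^ 2 * v ^ 2 + 2) / √((a ^ 2 * v ^ 2 + 4) * (v ^ 2 - 1))

namespace phiDerivIntegrand

theorem le_apply (a : ℝ) {v : ℝ} (hv : 1 < v) : a ≤ phiDerivIntegrand a v := by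
  have hv2 : 0 < v ^ 2 - 1 := by nlinarith
  have hD : 0 < √((a ^ 2 * v ^ 2 + 4) * (v ^ 2 - 1)) := sqrt_pos.2 (by positivity)
  rw [phiDerivIntegrand, le_div_iff₀ hD]
  have hsq : (a * √((a ^ 2 * v ^ 2 + 4) * (v ^ 2 - 1))) ^ 2 ≤ (a ^ 2 * v ^ 2 + 2) ^ 2 := by
    rw [mul_pow, sq_sqrt (by positivity)]
    nlinarith [sq_nonneg (a ^ 2 * v), sq_nonneg a]
  exact (abs_le_of_sq_le_sq' hsq (by positivity)).2

theorem two_sqrt_sub_one_le_sqrt (a : ℝ) {v : ℝ} (hv : 1 ≤ v) :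
    2 * √(v - 1) ≤ √((a ^ 2 * v ^ 2 + 4) * (v ^ 2 - 1)) := by
  rw [← sqrt_sq (zero_le_two : (0 : ℝ) ≤ 2), ← sqrt_mul (sq_nonneg 2)]
  apply sqrt_le_sqrt
  nlinarith [mul_nonneg (sq_nonneg (a * v)) (by nlinarith : (0 : ℝ) ≤ v ^ 2 - 1)]

theorem apply_le (a : ℝ) {b v : ℝ} (hv : v ∈ Ioc 1 b) :
    phiDerivIntegrand a v ≤ (a ^ 2 * b ^ 2 + 2) / 2 * (v - 1) ^ (-(1 / 2) : ℝ) := by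
  obtain ⟨hv1, hvb⟩ := hv
  have hnum : a ^ 2 * v ^ 2 + 2 ≤ a ^ 2 * b ^ 2 + 2 := by gcongr
  calc phiDerivIntegrand a v ≤ (a ^ 2 * b ^ 2 + 2) / (2 * √(v - 1)) :=
        div_le_div₀ (by positivity) hnum (by positivity) (two_sqrt_sub_one_le_sqrt a hv1.le)
    _ = (a ^ 2 * b ^ 2 + 2) / 2 * (v - 1) ^ (-(1 / 2) : ℝ) := by
        rw [rpow_neg (by linarith), ← sqrt_eq_rpow, div_mul_eq_div_div, div_eq_mul_inv _ (√_)]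

theorem intervalIntegrable (a : ℝ) {b : ℝ} (hb : 1 ≤ b) :
    IntervalIntegrable (phiDerivIntegrand a) MeasureTheory.volume 1 b := by
  have hbound : IntervalIntegrable
      (fun v ↦ (a ^ 2 * b ^ 2 + 2) / 2 * (v - 1) ^ (-(1 / 2) : ℝ)) MeasureTheory.volume 1 b := by
    simpa using ((intervalIntegrable_rpow' (r := -(1 / 2)) (a := 0) (b := b - 1)
      (by norm_num)).comp_sub_right 1).const_mul ((a ^ 2 * b ^ 2 + 2) / 2)
  have hmeas : Measurable (phiDerivIntegrand a) := by
    unfold phiDerivIntegrand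
    fun_prop
  refine hbound.mono_fun' hmeas.aestronglyMeasurable ?_
  rw [uIoc_of_le hb]
  filter_upwards [MeasureTheory.ae_restrict_mem measurableSet_Ioc] with v hv
  have hnonneg : 0 ≤ phiDerivIntegrand a v := by
    unfold phiDerivIntegrand
    positivity
  rw [norm_of_nonneg hnonneg]
  exact apply_le a hv

theorem mul_sub_one_le_integral (a : ℝ) {b : ℝ} (hb : 1 ≤ b) :
    a * (b - 1) ≤ ∫ v in (1 : ℝ)..b, phiDerivIntegrand a v := by
  calc a * (b - 1) = ∫ _ in (1 : ℝ)..b, a := by simp [mul_comm]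
    _ ≤ ∫ v in (1 : ℝ)..b, phiDerivIntegrand a v :=
      integral_mono_on_of_le_Ioo hb intervalIntegrable_const (intervalIntegrable a hb)
        fun v hv ↦ le_apply a hv.1

end phiDerivIntegrand

theorem sqrt_div_sq_sub_sq_le_three_halves {a τ : ℝ} (ha : 0 ≤ a) (hτ : 2 * a + 2 ≤ τ) :
    √((τ ^ 2 + 4) / (τ ^ 2 - a ^ 2)) ≤ 3 / 2 := by
  have hden : 0 < τ ^ 2 - a ^ 2 := by nlinarith
  rw [sqrt_le_left (by norm_num), div_le_iff₀ hden]
  nlinarith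

theorem stmt_4 (a : ℝ) (ha : 0 < a) :
    ∀ᶠ τ : ℝ in atTop,
      0 < (∫ v in (1 : ℝ)..(τ / a),
            (a ^ 2 * v ^ 2 + 2) / Real.sqrt ((a ^ 2 * v ^ 2 + 4) * (v ^ 2 - 1)))
          - (τ / 2) * Real.sqrt ((τ ^ 2 + 4) / (τ ^ 2 - a ^ 2)) := by
  filter_upwards [eventually_gt_atTop (4 * a), eventually_ge_atTop (2 * a + 2)] with τ hτ hτ'
  have hb : 1 ≤ τ / a := by
    rw [le_div_iff₀ ha]
    linarith
  have hintegral : τ - a ≤ ∫ v in (1 : ℝ)..(τ / a), phiDerivIntegrand a v := by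
    convert phiDerivIntegrand.mul_sub_one_le_integral a hb using 1
    field_simp
  have hsqrt := sqrt_div_sq_sub_sq_le_three_halves ha.le hτ'
  have hterm : τ / 2 * √((τ ^ 2 + 4) / (τ ^ 2 - a ^ 2)) ≤ 3 * τ / 4 := by
    nlinarith
  unfold phiDerivIntegrand at hintegral
  linarith
end

section
/- For every b > 0, ∫_1^∞ √(u+b)/(u²+b) du > π/2. -/
/-! Bound the integrand below by `√b / (u² + b)` on `(1, c]` and, strictly, by
`√u / (u² + u) = 1 / (√u (u + 1))` on `(c, ∞)`, where `c = max b 1`.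
Both minorants integrate to arctangents, `d/du arctan (u / √b) = √b / (u² + b)` and
`d/du 2 arctan √u = 1 / (√u (u + 1))`, and the two pieces add up to exactly `π / 2`
thanks to `arctan x + arctan x⁻¹ = π / 2`. -/

open Real MeasureTheory Set Filter Topology

lemma setIntegral_lt_setIntegral_of_forall_lt {X : Type*} [MeasurableSpace X] {μ : Measure X}
    {s : Set X} {f g : X → ℝ} (hs : MeasurableSet s) (hμs : μ s ≠ 0)
    (hf : IntegrableOn f s μ) (hg : IntegrableOn g s μ) (hlt : ∀ x ∈ s, f x < g x) :
    ∫ x in s, f x ∂μ < ∫ x in s, g x ∂μ := by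
  have hsupp : Function.support (fun x => g x - f x) ∩ s = s :=
    inter_eq_self_of_subset_right fun x hx => (sub_pos.2 (hlt x hx)).ne'
  rw [← sub_pos, ← integral_sub hg hf,
    setIntegral_pos_iff_support_of_nonneg_ae (f := fun x => g x - f x) _ (hg.sub hf), hsupp]
  · exact pos_iff_ne_zero.2 hμs
  · exact (ae_restrict_iff' hs).2 (Eventually.of_forall fun x hx => (sub_pos.2 (hlt x hx)).le)

lemma hasDerivAt_two_mul_arctan_sqrt {x : ℝ} (hx : 0 < x) :
    HasDerivAt (fun u => 2 * arctan √u) (√x * (x + 1))⁻¹ x := by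
  refine (((hasDerivAt_arctan √x).comp x (hasDerivAt_sqrt hx.ne')).const_mul 2).congr_deriv ?_
  rw [sq_sqrt hx.le]
  field_simp
  ring

lemma tendsto_two_mul_arctan_sqrt_atTop : Tendsto (fun u => 2 * arctan √u) atTop (𝓝 π) := by
  have h := ((tendsto_arctan_atTop.mono_right nhdsWithin_le_nhds).comp
    tendsto_sqrt_atTop).const_mul (2 : ℝ)
  rwa [mul_div_cancel₀ _ two_ne_zero] at h

lemma integrableOn_Ioi_inv_sqrt_mul_add_one {a : ℝ} (ha : 0 ≤ a) :
    IntegrableOn (fun u => (√u * (u + 1))⁻¹) (Ioi a) :=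
  integrableOn_Ioi_deriv_of_nonneg (by fun_prop)
    (fun x hx => hasDerivAt_two_mul_arctan_sqrt (ha.trans_lt hx))
    (fun x hx => by have := ha.trans_lt hx; positivity) tendsto_two_mul_arctan_sqrt_atTop

lemma integral_Ioi_inv_sqrt_mul_add_one {a : ℝ} (ha : 0 ≤ a) :
    ∫ u in Ioi a, (√u * (u + 1))⁻¹ = π - 2 * arctan √a :=
  integral_Ioi_of_hasDerivAt_of_nonneg (by fun_prop)
    (fun x hx => hasDerivAt_two_mul_arctan_sqrt (ha.trans_lt hx))
    (fun x hx => by have := ha.trans_lt hx; positivity) tendsto_two_mul_arctan_sqrt_atTop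

lemma integral_sqrt_div_sq_add {b : ℝ} (hb : 0 < b) (a c : ℝ) :
    ∫ u in a..c, √b / (u ^ 2 + b) = arctan (c / √b) - arctan (a / √b) := by
  refine intervalIntegral.integral_eq_sub_of_hasDerivAt (f := fun u => arctan (u / √b))
    (fun x _ => ?_)
    (Continuous.intervalIntegrable
      (by fun_prop (disch := intro; positivity) : Continuous fun u : ℝ => √b / (u ^ 2 + b)) _ _)
  refine ((hasDerivAt_arctan _).comp x ((hasDerivAt_id' x).div_const √b)).congr_deriv ?_
  field_simp
  rw [sq_sqrt hb.le]
  ring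

lemma integrableOn_Ioi_one_sqrt_add_div_sq_add {b : ℝ} (hb : 0 ≤ b) :
    IntegrableOn (fun u => √(u + b) / (u ^ 2 + b)) (Ioi 1) := by
  refine ((integrableOn_Ioi_rpow_of_lt (by norm_num : (-3 / 2 : ℝ) < -1) one_pos).const_mul
    √(1 + b)).mono' ?_ ?_
  · exact (by fun_prop : Measurable fun u : ℝ => √(u + b) / (u ^ 2 + b)).aestronglyMeasurable
  filter_upwards [ae_restrict_mem measurableSet_Ioi] with u (hu : 1 < u)
  have hu0 : 0 < u := one_pos.trans hu
  have hrpow : u ^ (-3 / 2 : ℝ) = √u / u ^ 2 := by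
    rw [sqrt_eq_rpow, ← rpow_natCast, ← rpow_sub hu0]
    norm_num
  rw [norm_of_nonneg (by positivity)]
  calc √(u + b) / (u ^ 2 + b) ≤ √((1 + b) * u) / u ^ 2 := by
        gcongr
        · nlinarith
        · linarith
    _ = √(1 + b) * u ^ (-3 / 2 : ℝ) := by
        rw [hrpow, sqrt_mul (by positivity)]
        ring

lemma inv_sqrt_mul_add_one_lt_sqrt_add_div_sq_add {b u : ℝ} (hb : 0 ≤ b) (hbu : b < u) :
    (√u * (u + 1))⁻¹ < √(u + b) / (u ^ 2 + b) := by
  have hu : 0 < u := hb.trans_lt hbu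
  calc (√u * (u + 1))⁻¹ = √u / (u ^ 2 + u) := by
        field_simp
        rw [sq_sqrt hu.le]
    _ < √u / (u ^ 2 + b) := by gcongr
    _ ≤ √(u + b) / (u ^ 2 + b) := by gcongr; linarith

lemma lt_integral_Ioi_one_sqrt_add_div_sq_add {b c : ℝ} (hb : 0 < b) (hc : 1 ≤ c) (hbc : b ≤ c) :
    arctan (c / √b) - arctan (1 / √b) + (π - 2 * arctan √c) <
      ∫ u in Ioi 1, √(u + b) / (u ^ 2 + b) := by
  have hf := integrableOn_Ioi_one_sqrt_add_div_sq_add hb.le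
  have hmid : arctan (c / √b) - arctan (1 / √b) ≤ ∫ u in Ioc 1 c, √(u + b) / (u ^ 2 + b) := by
    rw [← integral_sqrt_div_sq_add hb, intervalIntegral.integral_of_le hc]
    refine setIntegral_mono_on ?_ (hf.mono_set Ioc_subset_Ioi_self) measurableSet_Ioc
      fun u hu => ?_
    · exact (by fun_prop (disch := intro; positivity) :
        Continuous fun u : ℝ => √b / (u ^ 2 + b)).integrableOn_Ioc
    · gcongr
      linarith [hu.1]
  have htail : π - 2 * arctan √c < ∫ u in Ioi c, √(u + b) / (u ^ 2 + b) := by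
    have hc0 : 0 ≤ c := zero_le_one.trans hc
    rw [← integral_Ioi_inv_sqrt_mul_add_one hc0]
    exact setIntegral_lt_setIntegral_of_forall_lt measurableSet_Ioi (by simp)
      (integrableOn_Ioi_inv_sqrt_mul_add_one hc0) (hf.mono_set (Ioi_subset_Ioi hc))
      fun u hu => inv_sqrt_mul_add_one_lt_sqrt_add_div_sq_add hb.le (hbc.trans_lt hu)
  rw [← Ioc_union_Ioi_eq_Ioi hc, setIntegral_union (Ioc_disjoint_Ioi le_rfl) measurableSet_Ioi
    (hf.mono_set Ioc_subset_Ioi_self) (hf.mono_set (Ioi_subset_Ioi hc))]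
  exact add_lt_add_of_le_of_lt hmid htail

theorem stmt_8 (b : ℝ) (hb : 0 < b) :
    Real.pi / 2 < ∫ u in Ioi (1 : ℝ), Real.sqrt (u + b) / (u ^ 2 + b) := by
  rcases le_total b 1 with hb1 | hb1
  · convert lt_integral_Ioi_one_sqrt_add_div_sq_add hb le_rfl hb1 using 1
    rw [sqrt_one, arctan_one]
    ring
  · convert lt_integral_Ioi_one_sqrt_add_div_sq_add hb hb1 le_rfl using 1
    rw [div_sqrt, one_div, arctan_inv_of_pos (sqrt_pos.2 hb)]
    ring
end

section
/- The difference Ω₁(b) − I(b) tends to 0 as b → ∞, where Ω₁(b) = ∫_1^∞ (√u/√(u−1))·√(u+b)/(u²+b) du and I(b) = ∫_1^∞ √(u+b)/(u²+b) du; moreover I(b) → π/2 as b → ∞. Consequently Ω₁(b) → π/2 as b → ∞. -/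
/-!
Write `f_b(u) = √(u+b)/(u²+b)` for the kernel and `w(u) = √u/√(u-1) - 1` for the weight, so that
`Ω₁(b) - I(b) = ∫₁^∞ w f_b`. Since `0 ≤ w(u) ≤ (u-1)^(-1/2)` and `0 ≤ f_b(u) ≤ (u²+b)^(-1/2) ≤ 1/u`,
the integrand is dominated by `1/(u√(u-1))`, the derivative of `2 arctan √(u-1)`, and tends to `0`
pointwise; dominated convergence gives the first limit. For the second, split
`f_b = √b/(u²+b) + (√(u+b) - √b)/(u²+b)`: the first piece integrates to `π/2 - arctan(1/√b)`, and the
second is dominated by `√u/u²` and tends to `0` pointwise.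
-/

open Real MeasureTheory Set Filter Topology

theorem sqrt_add_le_sqrt_add_sqrt {x y : ℝ} (hx : 0 ≤ x) (hy : 0 ≤ y) :
    √(x + y) ≤ √x + √y := by
  rw [sqrt_le_left (by positivity), add_sq, sq_sqrt hx, sq_sqrt hy]
  nlinarith [mul_nonneg (sqrt_nonneg x) (sqrt_nonneg y)]

section Dominated

variable {α ι : Type*} [MeasurableSpace α] {μ : Measure α} {s : Set α} {f g : α → ℝ}

theorem integrableOn_of_nonneg_of_le (hs : MeasurableSet s) (hg : IntegrableOn g s μ)
    (hf : AEStronglyMeasurable f (μ.restrict s)) (hfg : ∀ x ∈ s, 0 ≤ f x ∧ f x ≤ g x) :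
    IntegrableOn f s μ :=
  hg.mono' hf <| ae_restrict_of_forall_mem hs fun x hx => by
    rw [Real.norm_of_nonneg (hfg x hx).1]; exact (hfg x hx).2

theorem tendsto_setIntegral_zero_of_nonneg_of_le {l : Filter ι} [l.IsCountablyGenerated]
    {F : ι → α → ℝ} (hs : MeasurableSet s) (hg : IntegrableOn g s μ)
    (hF : ∀ᶠ i in l, AEStronglyMeasurable (F i) (μ.restrict s))
    (hFg : ∀ᶠ i in l, ∀ x ∈ s, 0 ≤ F i x ∧ F i x ≤ g x)
    (hlim : ∀ x ∈ s, Tendsto (fun i => F i x) l (𝓝 0)) :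
    Tendsto (fun i => ∫ x in s, F i x ∂μ) l (𝓝 0) := by
  have hbound : ∀ᶠ i in l, ∀ᵐ x ∂μ.restrict s, ‖F i x‖ ≤ g x :=
    hFg.mono fun i h => ae_restrict_of_forall_mem hs fun x hx => by
      rw [Real.norm_of_nonneg (h x hx).1]; exact (h x hx).2
  simpa using tendsto_integral_filter_of_dominated_convergence g hF hbound hg
    (ae_restrict_of_forall_mem hs hlim)

end Dominated

theorem hasDerivAt_arctan_div {c : ℝ} (hc : c ≠ 0) (x : ℝ) :
    HasDerivAt (fun x => arctan (x / c)) (c / (x ^ 2 + c ^ 2)) x := by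
  convert ((hasDerivAt_id' x).div_const c).arctan using 1
  field_simp
  ring

theorem tendsto_arctan_div_atTop {c : ℝ} (hc : 0 < c) :
    Tendsto (fun x => arctan (x / c)) atTop (𝓝 (π / 2)) :=
  (tendsto_nhds_of_tendsto_nhdsWithin tendsto_arctan_atTop).comp (tendsto_id.atTop_div_const hc)

theorem integrableOn_Ioi_div_sq_add_sq {c : ℝ} (hc : 0 < c) (a : ℝ) :
    IntegrableOn (fun x => c / (x ^ 2 + c ^ 2)) (Ioi a) :=
  integrableOn_Ioi_deriv_of_nonneg' (fun x _ => hasDerivAt_arctan_div hc.ne' x)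
    (fun x _ => by positivity) (tendsto_arctan_div_atTop hc)

theorem integral_Ioi_div_sq_add_sq {c : ℝ} (hc : 0 < c) (a : ℝ) :
    ∫ x in Ioi a, c / (x ^ 2 + c ^ 2) = π / 2 - arctan (a / c) :=
  integral_Ioi_of_hasDerivAt_of_nonneg' (fun x _ => hasDerivAt_arctan_div hc.ne' x)
    (fun x _ => by positivity) (tendsto_arctan_div_atTop hc)

theorem hasDerivAt_two_mul_arctan_sqrt_sub_one {u : ℝ} (hu : 1 < u) :
    HasDerivAt (fun x => 2 * arctan √(x - 1)) (u * √(u - 1))⁻¹ u := by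
  have h0 : 0 < u - 1 := by linarith
  have hs : 0 < √(u - 1) := sqrt_pos.2 h0
  refine ((((hasDerivAt_id' u).sub_const 1).sqrt h0.ne').arctan.const_mul 2).congr_deriv ?_
  rw [sq_sqrt h0.le]
  field_simp
  ring

theorem integrableOn_Ioi_one_inv_mul_sqrt_sub_one :
    IntegrableOn (fun u => (u * √(u - 1))⁻¹) (Ioi 1) := by
  have hcont : Continuous fun x : ℝ => 2 * arctan √(x - 1) := by fun_prop
  have hlim : Tendsto (fun x : ℝ => 2 * arctan √(x - 1)) atTop (𝓝 (2 * (π / 2))) :=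
    ((tendsto_nhds_of_tendsto_nhdsWithin tendsto_arctan_atTop).comp
      (tendsto_sqrt_atTop.comp (tendsto_atTop_add_const_right _ (-1) tendsto_id))).const_mul 2
  exact integrableOn_Ioi_deriv_of_nonneg hcont.continuousWithinAt
    (fun u hu => hasDerivAt_two_mul_arctan_sqrt_sub_one hu)
    (fun u hu => by have : (0:ℝ) < u := lt_trans one_pos hu; positivity) hlim

theorem integrableOn_Ioi_sqrt_div_sq {a : ℝ} (ha : 0 < a) :
    IntegrableOn (fun u => √u / u ^ 2) (Ioi a) := by
  refine (integrableOn_Ioi_rpow_of_lt (by norm_num : (-3 / 2 : ℝ) < -1) ha).congr_fun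
    (fun u hu => ?_) measurableSet_Ioi
  have hu : 0 < u := ha.trans hu
  rw [sqrt_eq_rpow, ← rpow_natCast, ← rpow_sub hu]
  norm_num

section Pointwise

variable {u b : ℝ}

theorem sqrt_div_sqrt_sub_one_sub_one_mem_Icc (hu : 1 < u) :
    √u / √(u - 1) - 1 ∈ Icc 0 (√(u - 1))⁻¹ := by
  have hs : 0 < √(u - 1) := sqrt_pos.2 (by linarith)
  have hle : √u ≤ √(u - 1) + 1 := by
    simpa using sqrt_add_le_sqrt_add_sqrt (by linarith : 0 ≤ u - 1) zero_le_one
  constructor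
  · rw [sub_nonneg, le_div_iff₀ hs, one_mul]
    exact sqrt_le_sqrt (by linarith)
  · rw [sub_le_iff_le_add, div_le_iff₀ hs, add_mul, inv_mul_cancel₀ hs.ne', one_mul]
    linarith

theorem sqrt_add_div_sq_add_le_inv_sqrt (hu : 1 ≤ u) (hb : 0 ≤ b) :
    √(u + b) / (u ^ 2 + b) ≤ (√(u ^ 2 + b))⁻¹ := by
  rw [← one_div, ← sqrt_div_self']
  exact div_le_div_of_nonneg_right (sqrt_le_sqrt (by nlinarith)) (by positivity)

theorem inv_sqrt_sq_add_le_inv (hu : 0 < u) (hb : 0 ≤ b) : (√(u ^ 2 + b))⁻¹ ≤ u⁻¹ :=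
  inv_anti₀ hu <| (le_sqrt hu.le (by positivity)).2 (by linarith)

theorem weight_mul_kernel_mem_Icc (hu : 1 < u) (hb : 0 ≤ b) :
    (√u / √(u - 1) - 1) * (√(u + b) / (u ^ 2 + b)) ∈ Icc 0 (u * √(u - 1))⁻¹ := by
  obtain ⟨hw0, hw⟩ := sqrt_div_sqrt_sub_one_sub_one_mem_Icc hu
  have hu0 : 0 < u := by linarith
  have hk : √(u + b) / (u ^ 2 + b) ≤ u⁻¹ :=
    (sqrt_add_div_sq_add_le_inv_sqrt hu.le hb).trans (inv_sqrt_sq_add_le_inv hu0 hb)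
  refine ⟨mul_nonneg hw0 (by positivity), ?_⟩
  rw [mul_inv, mul_comm u⁻¹]
  exact mul_le_mul hw hk (by positivity) (by positivity)

theorem sqrt_add_sub_sqrt_div_mem_Icc (hu : 0 < u) (hb : 0 ≤ b) :
    (√(u + b) - √b) / (u ^ 2 + b) ∈ Icc 0 (√u / (u ^ 2 + b)) := by
  have hnum : √(u + b) - √b ≤ √u := by
    linarith [sqrt_add_le_sqrt_add_sqrt hu.le hb]
  have hnum0 : 0 ≤ √(u + b) - √b := sub_nonneg.2 (sqrt_le_sqrt (by linarith))
  exact ⟨by positivity, div_le_div_of_nonneg_right hnum (by positivity)⟩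

theorem sqrt_add_sub_sqrt_div_mem_Icc_sqrt_div_sq (hu : 0 < u) (hb : 0 ≤ b) :
    (√(u + b) - √b) / (u ^ 2 + b) ∈ Icc 0 (√u / u ^ 2) := by
  obtain ⟨h0, hle⟩ := sqrt_add_sub_sqrt_div_mem_Icc hu hb
  exact ⟨h0, hle.trans (div_le_div_of_nonneg_left (sqrt_nonneg u) (by positivity) (by linarith))⟩

theorem tendsto_sqrt_add_div_sq_add_atTop (hu : 1 ≤ u) :
    Tendsto (fun b => √(u + b) / (u ^ 2 + b)) atTop (𝓝 0) := by
  have hlim : Tendsto (fun b => (√(u ^ 2 + b))⁻¹) atTop (𝓝 0) :=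
    tendsto_inv_atTop_zero.comp (tendsto_sqrt_atTop.comp (tendsto_atTop_add_const_left _ _ tendsto_id))
  refine squeeze_zero' ?_ ?_ hlim
  · filter_upwards [eventually_ge_atTop 0] with b hb
    have : 0 < u := by linarith
    positivity
  · filter_upwards [eventually_ge_atTop 0] with b hb
    exact sqrt_add_div_sq_add_le_inv_sqrt hu hb

end Pointwise

theorem integrableOn_Ioi_one_weight_mul_kernel {b : ℝ} (hb : 0 ≤ b) :
    IntegrableOn (fun u => (√u / √(u - 1) - 1) * (√(u + b) / (u ^ 2 + b))) (Ioi 1) :=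
  integrableOn_of_nonneg_of_le measurableSet_Ioi integrableOn_Ioi_one_inv_mul_sqrt_sub_one
    (by fun_prop) fun _ hu => weight_mul_kernel_mem_Icc hu hb

theorem tendsto_integral_Ioi_one_weight_mul_kernel :
    Tendsto (fun b => ∫ u in Ioi 1, (√u / √(u - 1) - 1) * (√(u + b) / (u ^ 2 + b)))
      atTop (𝓝 0) := by
  refine tendsto_setIntegral_zero_of_nonneg_of_le measurableSet_Ioi
    integrableOn_Ioi_one_inv_mul_sqrt_sub_one (Eventually.of_forall fun b => by fun_prop)
    ((eventually_ge_atTop 0).mono fun b hb u hu => weight_mul_kernel_mem_Icc hu hb)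
    fun u hu => ?_
  simpa using (tendsto_sqrt_add_div_sq_add_atTop (mem_Ioi.1 hu).le).const_mul (√u / √(u - 1) - 1)

section Kernel

variable {a b : ℝ}

theorem integrableOn_Ioi_sqrt_add_sub_sqrt_div (ha : 0 < a) (hb : 0 ≤ b) :
    IntegrableOn (fun u => (√(u + b) - √b) / (u ^ 2 + b)) (Ioi a) :=
  integrableOn_of_nonneg_of_le measurableSet_Ioi (integrableOn_Ioi_sqrt_div_sq ha)
    (by fun_prop : Measurable _).aestronglyMeasurable
    fun _ hu => sqrt_add_sub_sqrt_div_mem_Icc_sqrt_div_sq (ha.trans hu) hb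

theorem tendsto_integral_Ioi_sqrt_add_sub_sqrt_div (ha : 0 < a) :
    Tendsto (fun b => ∫ u in Ioi a, (√(u + b) - √b) / (u ^ 2 + b)) atTop (𝓝 0) := by
  refine tendsto_setIntegral_zero_of_nonneg_of_le measurableSet_Ioi
    (integrableOn_Ioi_sqrt_div_sq ha)
    (Eventually.of_forall fun b => (by fun_prop : Measurable _).aestronglyMeasurable)
    ((eventually_ge_atTop 0).mono fun b hb u hu =>
      sqrt_add_sub_sqrt_div_mem_Icc_sqrt_div_sq (ha.trans hu) hb)
    fun u hu => ?_
  have hu : 0 < u := ha.trans hu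
  refine squeeze_zero' (g := fun b => √u / (u ^ 2 + b)) ?_ ?_ <|
    tendsto_const_nhds.div_atTop (tendsto_atTop_add_const_left _ _ tendsto_id)
  · filter_upwards [eventually_ge_atTop 0] with b hb
    exact (sqrt_add_sub_sqrt_div_mem_Icc hu hb).1
  · filter_upwards [eventually_ge_atTop 0] with b hb
    exact (sqrt_add_sub_sqrt_div_mem_Icc hu hb).2

theorem sqrt_add_div_sq_add_eq (b u : ℝ) :
    √(u + b) / (u ^ 2 + b) = √b / (u ^ 2 + b) + (√(u + b) - √b) / (u ^ 2 + b) := by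
  ring

theorem integrableOn_Ioi_sqrt_add_div_sq_add (ha : 0 < a) (hb : 0 < b) :
    IntegrableOn (fun u => √(u + b) / (u ^ 2 + b)) (Ioi a) := by
  have h := integrableOn_Ioi_div_sq_add_sq (sqrt_pos.2 hb) a
  rw [sq_sqrt hb.le] at h
  exact (h.add (integrableOn_Ioi_sqrt_add_sub_sqrt_div ha hb.le)).congr_fun
    (fun u _ => (sqrt_add_div_sq_add_eq b u).symm) measurableSet_Ioi

theorem integral_Ioi_sqrt_add_div_sq_add (ha : 0 < a) (hb : 0 < b) :
    ∫ u in Ioi a, √(u + b) / (u ^ 2 + b) =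
      π / 2 - arctan (a / √b) + ∫ u in Ioi a, (√(u + b) - √b) / (u ^ 2 + b) := by
  have h := integrableOn_Ioi_div_sq_add_sq (sqrt_pos.2 hb) a
  have hval := integral_Ioi_div_sq_add_sq (sqrt_pos.2 hb) a
  rw [sq_sqrt hb.le] at h hval
  simp only [sqrt_add_div_sq_add_eq b]
  rw [integral_add h (integrableOn_Ioi_sqrt_add_sub_sqrt_div ha hb.le), hval]

theorem tendsto_integral_Ioi_sqrt_add_div_sq_add (ha : 0 < a) :
    Tendsto (fun b => ∫ u in Ioi a, √(u + b) / (u ^ 2 + b)) atTop (𝓝 (π / 2)) := by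
  have harctan : Tendsto (fun b => arctan (a / √b)) atTop (𝓝 0) := by
    simpa [Function.comp_def] using (continuous_arctan.tendsto 0).comp
      (tendsto_const_nhds.div_atTop tendsto_sqrt_atTop)
  have hlim := ((tendsto_const_nhds (x := π / 2)).sub harctan).add
    (tendsto_integral_Ioi_sqrt_add_sub_sqrt_div ha)
  rw [sub_zero, add_zero] at hlim
  refine hlim.congr' ?_
  filter_upwards [eventually_gt_atTop 0] with b hb
  exact (integral_Ioi_sqrt_add_div_sq_add ha hb).symm

end Kernel

theorem integral_Ioi_one_sqrt_div_sqrt_sub_one_mul_sub {b : ℝ} (hb : 0 < b) :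
    (∫ u in Ioi 1, (√u / √(u - 1)) * (√(u + b) / (u ^ 2 + b))) -
        ∫ u in Ioi 1, √(u + b) / (u ^ 2 + b) =
      ∫ u in Ioi 1, (√u / √(u - 1) - 1) * (√(u + b) / (u ^ 2 + b)) := by
  have hsplit : (fun u => (√u / √(u - 1)) * (√(u + b) / (u ^ 2 + b))) =
      fun u => (√u / √(u - 1) - 1) * (√(u + b) / (u ^ 2 + b)) + √(u + b) / (u ^ 2 + b) := by
    ext u; ring
  rw [hsplit, integral_add (integrableOn_Ioi_one_weight_mul_kernel hb.le)
    (integrableOn_Ioi_sqrt_add_div_sq_add one_pos hb), add_sub_cancel_right]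

theorem stmt_13 :
    Tendsto
      (fun b : ℝ =>
        (∫ u in Ioi (1 : ℝ),
            (Real.sqrt u / Real.sqrt (u - 1)) * (Real.sqrt (u + b) / (u ^ 2 + b))) -
          ∫ u in Ioi (1 : ℝ), Real.sqrt (u + b) / (u ^ 2 + b))
      atTop (nhds 0) ∧
    Tendsto (fun b : ℝ => ∫ u in Ioi (1 : ℝ), Real.sqrt (u + b) / (u ^ 2 + b))
      atTop (nhds (Real.pi / 2)) ∧
    Tendsto
      (fun b : ℝ => ∫ u in Ioi (1 : ℝ),
        (Real.sqrt u / Real.sqrt (u - 1)) * (Real.sqrt (u + b) / (u ^ 2 + b)))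
      atTop (nhds (Real.pi / 2)) := by
  have hI := tendsto_integral_Ioi_sqrt_add_div_sq_add one_pos
  have hD := tendsto_integral_Ioi_one_weight_mul_kernel.congr' <|
    (eventually_gt_atTop 0).mono fun b hb => (integral_Ioi_one_sqrt_div_sqrt_sub_one_mul_sub hb).symm
  exact ⟨hD, hI, by simpa using hD.add hI⟩
end

section
/- The function J(a) = 2∫_1^∞ dv / (v·(v + √(v² + 4/a²))·√((v²−1)(v² + 4/a²))) tends to π/4 as a → ∞. -/
open Real MeasureTheory Set Filter Topology

/-!
With c = 4/a², the integrand is antitone in c ≥ 0 and continuous at c = 0, where it equals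
(2v³√(v²-1))⁻¹. Dominated convergence therefore reduces the claim to
∫_1^∞ dv / (v³√(v²-1)) = π/4, which the substitution v = sec θ turns into
∫_0^{π/2} cos² θ dθ = π/4.
-/

lemma image_inv_cos_Ioo : (fun θ : ℝ => (cos θ)⁻¹) '' Ioo 0 (π / 2) = Ioi 1 := by
  ext y
  constructor
  · rintro ⟨θ, ⟨h0, h1⟩, rfl⟩
    have hc : 0 < cos θ := cos_pos_of_mem_Ioo ⟨by linarith [pi_pos], h1⟩
    have hlt : cos θ < 1 := by
      simpa using strictAntiOn_cos (left_mem_Icc.2 pi_pos.le) ⟨h0.le, by linarith [pi_pos]⟩ h0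
    exact one_lt_inv_iff₀.2 ⟨hc, hlt⟩
  · intro (hy : 1 < y)
    have hy0 : 0 < y := one_pos.trans hy
    refine ⟨arccos y⁻¹, ⟨arccos_pos.2 (inv_lt_one_of_one_lt₀ hy),
      arccos_lt_pi_div_two.2 (inv_pos.2 hy0)⟩, ?_⟩
    dsimp only
    rw [cos_arccos (by linarith [inv_pos.2 hy0]) (inv_lt_one_of_one_lt₀ hy).le, inv_inv]

lemma injOn_inv_cos_Ioo : InjOn (fun θ : ℝ => (cos θ)⁻¹) (Ioo 0 (π / 2)) := by
  have hsub : Ioo 0 (π / 2) ⊆ Icc 0 π :=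
    Ioo_subset_Icc_self.trans (Icc_subset_Icc_right (by linarith [pi_pos]))
  exact fun _ hx _ hy hxy => injOn_cos (hsub hx) (hsub hy) (inv_injective hxy)

lemma hasDerivWithinAt_inv_cos_Ioo {θ : ℝ} (hθ : θ ∈ Ioo 0 (π / 2)) :
    HasDerivWithinAt (fun θ : ℝ => (cos θ)⁻¹) (sin θ / cos θ ^ 2) (Ioo 0 (π / 2)) θ := by
  have hc : cos θ ≠ 0 := (cos_pos_of_mem_Ioo ⟨by linarith [pi_pos, hθ.1], hθ.2⟩).ne'
  rw [← neg_neg (sin θ)]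
  exact ((hasDerivAt_cos θ).inv hc).hasDerivWithinAt

lemma abs_deriv_inv_cos_smul {θ : ℝ} (hθ : θ ∈ Ioo 0 (π / 2)) :
    |sin θ / cos θ ^ 2| • ((cos θ)⁻¹ ^ 3 * √((cos θ)⁻¹ ^ 2 - 1))⁻¹ = cos θ ^ 2 := by
  have hc : 0 < cos θ := cos_pos_of_mem_Ioo ⟨by linarith [pi_pos, hθ.1], hθ.2⟩
  have hs : 0 < sin θ := sin_pos_of_pos_of_lt_pi hθ.1 (by linarith [pi_pos, hθ.2])
  have htan : (cos θ)⁻¹ ^ 2 - 1 = (sin θ / cos θ) ^ 2 := by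
    field_simp
    linarith [sin_sq_add_cos_sq θ]
  rw [htan, sqrt_sq (by positivity), abs_of_pos (by positivity), smul_eq_mul]
  field_simp

lemma integrableOn_inv_pow_three_mul_sqrt :
    IntegrableOn (fun v : ℝ => (v ^ 3 * √(v ^ 2 - 1))⁻¹) (Ioi 1) := by
  rw [← image_inv_cos_Ioo, integrableOn_image_iff_integrableOn_abs_deriv_smul measurableSet_Ioo
    (fun _ => hasDerivWithinAt_inv_cos_Ioo) injOn_inv_cos_Ioo]
  refine IntegrableOn.congr_fun ?_ (fun θ hθ => (abs_deriv_inv_cos_smul hθ).symm) measurableSet_Ioo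
  exact (continuous_cos.pow 2).integrableOn_Icc.mono_set Ioo_subset_Icc_self

lemma integral_inv_pow_three_mul_sqrt :
    ∫ v in Ioi 1, (v ^ 3 * √(v ^ 2 - 1))⁻¹ = π / 4 := by
  rw [← image_inv_cos_Ioo, integral_image_eq_integral_abs_deriv_smul measurableSet_Ioo
    (fun _ => hasDerivWithinAt_inv_cos_Ioo) injOn_inv_cos_Ioo,
    setIntegral_congr_fun measurableSet_Ioo (fun _ => abs_deriv_inv_cos_smul),
    ← integral_Ioc_eq_integral_Ioo, ← intervalIntegral.integral_of_le (by positivity),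
    integral_cos_sq]
  simp
  ring

noncomputable def catenoidKernel (c v : ℝ) : ℝ :=
  (v * (v + √(v ^ 2 + c)) * √((v ^ 2 - 1) * (v ^ 2 + c)))⁻¹

lemma catenoidKernel_zero {v : ℝ} (hv : 0 ≤ v) :
    catenoidKernel 0 v = 2⁻¹ * (v ^ 3 * √(v ^ 2 - 1))⁻¹ := by
  rw [catenoidKernel, add_zero, sqrt_mul' _ (sq_nonneg v), sqrt_sq hv, ← mul_inv]
  ring_nf

lemma catenoidKernel_nonneg {c v : ℝ} (hv : 0 ≤ v) : 0 ≤ catenoidKernel c v := by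
  unfold catenoidKernel
  positivity

lemma catenoidKernel_le_catenoidKernel_zero {c v : ℝ} (hc : 0 ≤ c) (hv : 1 < v) :
    catenoidKernel c v ≤ catenoidKernel 0 v := by
  have hv0 : 0 < v := one_pos.trans hv
  have hv1 : 0 < v ^ 2 - 1 := by nlinarith
  have hsqrt : √(v ^ 2) ≤ √(v ^ 2 + c) := sqrt_le_sqrt (by linarith)
  rw [sqrt_sq hv0.le] at hsqrt
  unfold catenoidKernel
  rw [add_zero]
  gcongr <;> linarith

lemma continuousAt_catenoidKernel {c v : ℝ} (hc : 0 ≤ c) (hv : 1 < v) :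
    ContinuousAt (catenoidKernel · v) c := by
  have hv0 : 0 < v := one_pos.trans hv
  have hv1 : 0 < v ^ 2 - 1 := by nlinarith
  have hden : v * (v + √(v ^ 2 + c)) * √((v ^ 2 - 1) * (v ^ 2 + c)) ≠ 0 := by
    have : 0 < √((v ^ 2 - 1) * (v ^ 2 + c)) := sqrt_pos.2 (by positivity)
    positivity
  exact ContinuousAt.inv₀ (by fun_prop) hden

lemma tendsto_integral_catenoidKernel :
    Tendsto (fun c => ∫ v in Ioi 1, catenoidKernel c v) (𝓝[≥] 0) (𝓝 (π / 8)) := by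
  have hlim : ∫ v in Ioi 1, catenoidKernel 0 v = π / 8 := by
    rw [setIntegral_congr_fun measurableSet_Ioi
      (fun v (hv : 1 < v) => catenoidKernel_zero (zero_le_one.trans hv.le)), integral_const_mul,
      integral_inv_pow_three_mul_sqrt]
    ring
  rw [← hlim]
  refine tendsto_integral_filter_of_dominated_convergence (catenoidKernel 0) ?_ ?_ ?_ ?_
  · refine Eventually.of_forall fun c => Measurable.aestronglyMeasurable ?_
    unfold catenoidKernel
    fun_prop
  · filter_upwards [self_mem_nhdsWithin] with c (hc : 0 ≤ c)
    filter_upwards [ae_restrict_mem measurableSet_Ioi] with v (hv : 1 < v)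
    rw [norm_of_nonneg (catenoidKernel_nonneg (zero_le_one.trans hv.le))]
    exact catenoidKernel_le_catenoidKernel_zero hc hv
  · exact IntegrableOn.congr_fun (integrableOn_inv_pow_three_mul_sqrt.const_mul 2⁻¹)
      (fun v (hv : 1 < v) => (catenoidKernel_zero (zero_le_one.trans hv.le)).symm)
      measurableSet_Ioi
  · filter_upwards [ae_restrict_mem measurableSet_Ioi] with v (hv : 1 < v)
    exact (continuousAt_catenoidKernel le_rfl hv).tendsto.mono_left nhdsWithin_le_nhds

theorem stmt_15 :
    Tendsto
      (fun a : ℝ => 2 * ∫ v in Ioi (1 : ℝ),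
        (v * (v + Real.sqrt (v ^ 2 + 4 / a ^ 2)) *
          Real.sqrt ((v ^ 2 - 1) * (v ^ 2 + 4 / a ^ 2)))⁻¹)
      atTop (nhds (Real.pi / 4)) := by
  have hc : Tendsto (fun a : ℝ => 4 / a ^ 2) atTop (𝓝[≥] 0) :=
    tendsto_nhdsWithin_iff.2 ⟨tendsto_const_nhds.div_atTop (tendsto_pow_atTop two_ne_zero),
      Eventually.of_forall fun a => mem_Ici.2 (by positivity)⟩
  have h := (tendsto_integral_catenoidKernel.comp hc).const_mul 2
  rwa [show 2 * (π / 8) = π / 4 by ring] at h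
end

section
/- Let a > 0 and n ≥ 1 an integer, and let f be a positive twice differentiable function with f(0)=a, f'(0)=0 satisfying f·(4+f²)·f'' = 4(2n−1)(1+f'²) + (2n−2)·f²·f'². Then the function t ↦ f(t)^{2n−1}·(1 + f'(t)² + f(t)²f'(t)²/4)^{-1/2} is constant equal to a^{2n−1}. -/
/-!
With `k = 2n - 1` and `G = 1 + f'² + f²f'²/4`, the ODE multiplied by `f'/2` gives
`2k f' G = f G'`, i.e. `(f^{2k} / G)' = 0`. Hence `f^k / √G` has vanishing
derivative, so it is constant, and at `t = 0` it equals `a^k` because `f'(0) = 0`.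
-/

open Real

theorem hasDerivAt_mul_inv_sqrt_eq_zero {v G : ℝ → ℝ} {v' G' t : ℝ} (hv : HasDerivAt v v' t)
    (hG : HasDerivAt G G' t) (hGpos : 0 < G t) (h : 2 * v' * G t = v t * G') :
    HasDerivAt (fun s => v s * (√(G s))⁻¹) 0 t := by
  have hsqrt : √(G t) ≠ 0 := (sqrt_pos.2 hGpos).ne'
  refine (hv.mul ((hG.sqrt hGpos.ne').inv hsqrt)).congr_deriv ?_
  simp only [Pi.inv_apply]
  field_simp
  rw [sq_sqrt hGpos.le]
  linear_combination h

theorem hasDerivAt_pow_mul_inv_sqrt_eq_zero {u G : ℝ → ℝ} {u' G' t : ℝ} {k : ℕ} (hk : 1 ≤ k)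
    (hu : HasDerivAt u u' t) (hG : HasDerivAt G G' t) (hGpos : 0 < G t)
    (h : 2 * k * u' * G t = u t * G') :
    HasDerivAt (fun s => u s ^ k * (√(G s))⁻¹) 0 t := by
  refine hasDerivAt_mul_inv_sqrt_eq_zero (hu.pow k) hG hGpos ?_
  obtain ⟨j, rfl⟩ := Nat.exists_eq_add_of_le' hk
  simp only [Nat.add_sub_cancel, pow_succ]
  linear_combination u t ^ j * h

theorem catenoid_flux_balance_of_ode {k x y z : ℝ}
    (hode : x * (4 + x ^ 2) * z = 4 * k * (1 + y ^ 2) + (k - 1) * x ^ 2 * y ^ 2) :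
    2 * k * y * (1 + y ^ 2 + x ^ 2 * y ^ 2 / 4) =
      x * (2 * y * z + (2 * x * y * y ^ 2 + x ^ 2 * (2 * y * z)) / 4) := by
  linear_combination (-y / 2) * hode

theorem stmt_17_general (n : ℕ) (hn : 1 ≤ n) (a : ℝ) (f : ℝ → ℝ)
    (hf : Differentiable ℝ f) (hf' : Differentiable ℝ (deriv f))
    (h0 : f 0 = a) (h0' : deriv f 0 = 0)
    (hode : ∀ t, f t * (4 + f t ^ 2) * deriv (deriv f) t =
      4 * (2 * (n : ℝ) - 1) * (1 + (deriv f t) ^ 2) +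
        (2 * (n : ℝ) - 2) * f t ^ 2 * (deriv f t) ^ 2) :
    ∀ t : ℝ,
      f t ^ (2 * n - 1) *
        (Real.sqrt (1 + (deriv f t) ^ 2 + f t ^ 2 * (deriv f t) ^ 2 / 4))⁻¹ =
      a ^ (2 * n - 1) := by
  have hk : ((2 * n - 1 : ℕ) : ℝ) = 2 * n - 1 := by
    rw [Nat.cast_sub (by omega)]
    push_cast
    ring
  have hflux : ∀ t, HasDerivAt (fun s => f s ^ (2 * n - 1) *
      (√(1 + deriv f s ^ 2 + f s ^ 2 * deriv f s ^ 2 / 4))⁻¹) 0 t := by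
    intro t
    have hu := (hf t).hasDerivAt
    have hu' := (hf' t).hasDerivAt
    refine hasDerivAt_pow_mul_inv_sqrt_eq_zero (by omega) hu
      (((hasDerivAt_const t 1).add (hu'.pow 2)).add (((hu.pow 2).mul (hu'.pow 2)).div_const 4))
      (by positivity) ?_
    have hbalance := catenoid_flux_balance_of_ode (k := 2 * n - 1) (x := f t) (y := deriv f t)
      (z := deriv (deriv f) t) (by rw [hode t]; ring)
    rw [hk]
    norm_num only [Pi.pow_apply]
    linear_combination hbalance
  intro t
  rw [is_const_of_deriv_eq_zero (fun s => (hflux s).differentiableAt) (fun s => (hflux s).deriv) t 0]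
  simp [h0, h0']

theorem stmt_17 (n : ℕ) (hn : 1 ≤ n) (a : ℝ) (ha : 0 < a) (f : ℝ → ℝ)
    (hpos : ∀ t, 0 < f t) (hf : Differentiable ℝ f) (hf' : Differentiable ℝ (deriv f))
    (h0 : f 0 = a) (h0' : deriv f 0 = 0)
    (hode : ∀ t, f t * (4 + f t ^ 2) * deriv (deriv f) t =
      4 * (2 * (n : ℝ) - 1) * (1 + (deriv f t) ^ 2) +
        (2 * (n : ℝ) - 2) * f t ^ 2 * (deriv f t) ^ 2) :
    ∀ t : ℝ,
      f t ^ (2 * n - 1) *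
        (Real.sqrt (1 + (deriv f t) ^ 2 + f t ^ 2 * (deriv f t) ^ 2 / 4))⁻¹ =
      a ^ (2 * n - 1) :=
  stmt_17_general n hn a f hf hf' h0 h0' hode
end

section
/- For every integer n ≥ 2 and every a > 0, the improper integral φ(a,∞) = (a^{2n−1}/2)·∫_a^∞ √((u²+4)/(u^{4n−2} − a^{4n−2})) du converges (is finite). -/
open Real MeasureTheory Set

theorem stmt_18 (n : ℕ) (hn : 2 ≤ n) (a : ℝ) (ha : 0 < a) :
    IntegrableOn
      (fun u : ℝ => Real.sqrt ((u ^ 2 + 4) / (u ^ (4 * n - 2) - a ^ (4 * n - 2))))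
      (Ioi a) := by
  set m := 4 * n - 2 with hmdef
  have hm6 : 6 ≤ m := by omega
  set f : ℝ → ℝ := fun u => Real.sqrt ((u ^ 2 + 4) / (u ^ m - a ^ m)) with hf
  have hmeas : Measurable f := by
    apply Real.continuous_sqrt.measurable.comp
    exact ((measurable_id.pow_const 2).add_const 4).div
      ((measurable_id.pow_const m).sub_const _)
  -- Part 1 : integrable on Ioc a (2*a)
  have h1 : IntegrableOn f (Ioc a (2 * a)) := by
    set C : ℝ := ((2 * a) ^ 2 + 4) / a ^ (m - 1) with hC
    have hC0 : 0 ≤ C := by positivity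
    have hint : IntegrableOn (fun u => Real.sqrt C * (u - a) ^ (-(1 / 2) : ℝ))
        (Ioc a (2 * a)) := by
      have h0 : IntervalIntegrable (fun x : ℝ => x ^ (-(1 / 2) : ℝ)) volume 0 a :=
        intervalIntegral.intervalIntegrable_rpow' (by norm_num)
      have h1 := h0.comp_sub_right a
      rw [zero_add, ← two_mul] at h1
      have h2 := (intervalIntegrable_iff_integrableOn_Ioc_of_le (by linarith)).mp h1
      exact h2.const_mul _
    refine hint.mono' hmeas.aestronglyMeasurable.restrict ?_
    rw [ae_restrict_iff' measurableSet_Ioc]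
    filter_upwards with u hu
    obtain ⟨hua, hu2⟩ := hu
    have hu0 : 0 < u := lt_trans ha hua
    have hden0 : 0 < a ^ (m - 1) * (u - a) := mul_pos (by positivity) (by linarith)
    have hpow : a ^ (m - 1) ≤ u ^ (m - 1) := pow_le_pow_left₀ ha.le hua.le _
    have e1 : u ^ m = u ^ (m - 1) * u := by rw [← pow_succ]; congr 1; omega
    have e2 : a ^ m = a ^ (m - 1) * a := by rw [← pow_succ]; congr 1; omega
    have hden : a ^ (m - 1) * (u - a) ≤ u ^ m - a ^ m := by
      rw [e1, e2]
      nlinarith [mul_le_mul_of_nonneg_right hpow hu0.le]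
    have hnum : u ^ 2 + 4 ≤ (2 * a) ^ 2 + 4 := by
      nlinarith
    have key : (u ^ 2 + 4) / (u ^ m - a ^ m) ≤ C / (u - a) := by
      rw [hC, div_div]
      exact div_le_div₀ (by positivity) hnum hden0 hden
    have hnn : 0 ≤ f u := Real.sqrt_nonneg _
    rw [Real.norm_eq_abs, abs_of_nonneg hnn]
    calc f u ≤ Real.sqrt (C / (u - a)) := Real.sqrt_le_sqrt key
      _ = Real.sqrt C * (u - a) ^ (-(1 / 2) : ℝ) := by
          rw [Real.sqrt_div hC0, Real.sqrt_eq_rpow (u - a), Real.rpow_neg (by linarith),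
            div_eq_mul_inv]
  -- Part 2 : integrable on Ioi (2*a)
  have h2 : IntegrableOn f (Ioi (2 * a)) := by
    set K : ℝ := 1 / (2 * a) ^ (m - 6) + 4 / (2 * a) ^ (m - 4) with hK
    have hK0 : 0 < K := by positivity
    have hint : IntegrableOn (fun u : ℝ => Real.sqrt (2 * K) * u ^ (-2 : ℝ))
        (Ioi (2 * a)) :=
      (integrableOn_Ioi_rpow_of_lt (by norm_num) (by linarith)).const_mul _
    refine hint.mono' hmeas.aestronglyMeasurable.restrict ?_
    rw [ae_restrict_iff' measurableSet_Ioi]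
    filter_upwards with u hu
    rw [mem_Ioi] at hu
    have hu0 : 0 < u := by linarith
    have hden : u ^ m / 2 ≤ u ^ m - a ^ m := by
      have h1 : a ^ m ≤ (u / 2) ^ m := pow_le_pow_left₀ ha.le (by linarith) _
      have h2 : (u / 2) ^ m = u ^ m / 2 ^ m := div_pow u 2 m
      have h3 : u ^ m / 2 ^ m ≤ u ^ m / 2 := by
        apply div_le_div_of_nonneg_left (by positivity) (by norm_num)
        exact le_self_pow₀ (by norm_num) (by omega)
      linarith
    have hnum : u ^ 2 + 4 ≤ K * u ^ (m - 4) := by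
      have e1 : u ^ (m - 4) = u ^ 2 * u ^ (m - 6) := by rw [← pow_add]; congr 1; omega
      have h1 : (2 * a) ^ (m - 6) ≤ u ^ (m - 6) := pow_le_pow_left₀ (by linarith) hu.le _
      have h2 : (2 * a) ^ (m - 4) ≤ u ^ (m - 4) := pow_le_pow_left₀ (by linarith) hu.le _
      have hp1 : 0 < (2 * a) ^ (m - 6) := by positivity
      have hp2 : 0 < (2 * a) ^ (m - 4) := by positivity
      have b1 : u ^ 2 ≤ u ^ (m - 4) / (2 * a) ^ (m - 6) := by
        rw [le_div_iff₀ hp1, e1]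
        exact mul_le_mul_of_nonneg_left h1 (by positivity)
      have b2 : 4 ≤ 4 * (u ^ (m - 4) / (2 * a) ^ (m - 4)) := by
        have : 1 ≤ u ^ (m - 4) / (2 * a) ^ (m - 4) := (one_le_div hp2).mpr h2
        linarith
      calc u ^ 2 + 4 ≤ u ^ (m - 4) / (2 * a) ^ (m - 6)
            + 4 * (u ^ (m - 4) / (2 * a) ^ (m - 4)) := add_le_add b1 b2
        _ = K * u ^ (m - 4) := by rw [hK]; ring
    have key : (u ^ 2 + 4) / (u ^ m - a ^ m) ≤ 2 * K / u ^ 4 := by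
      have e4 : u ^ m = u ^ (m - 4) * u ^ 4 := by rw [← pow_add]; congr 1; omega
      have hd0 : 0 < u ^ m / 2 := by positivity
      calc (u ^ 2 + 4) / (u ^ m - a ^ m) ≤ (K * u ^ (m - 4)) / (u ^ m / 2) :=
            div_le_div₀ (by positivity) hnum hd0 hden
        _ = 2 * K / u ^ 4 := by
            rw [e4]; field_simp
    have hnn : 0 ≤ f u := Real.sqrt_nonneg _
    rw [Real.norm_eq_abs, abs_of_nonneg hnn]
    calc f u ≤ Real.sqrt (2 * K / u ^ 4) := Real.sqrt_le_sqrt key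
      _ = Real.sqrt (2 * K) * u ^ (-2 : ℝ) := by
          rw [Real.sqrt_div (by positivity), Real.rpow_neg hu0.le]
          have : Real.sqrt (u ^ 4) = u ^ 2 := by
            rw [show u ^ 4 = (u ^ 2) ^ 2 by ring, Real.sqrt_sq (by positivity)]
          rw [this, div_eq_mul_inv]
          congr 1
          rw [show ((2 : ℝ) : ℝ) = ((2 : ℕ) : ℝ) by norm_num, Real.rpow_natCast]
    
  have hsplit : Ioi a = Ioc a (2 * a) ∪ Ioi (2 * a) :=
    (Ioc_union_Ioi_eq_Ioi (by linarith)).symm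
  rw [hsplit]
  exact h1.union h2
end
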